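/- For every even integer n ≥ 4, the matching sequencibility and the cyclic matching sequencibility of the path P_n on n vertices both equal (n-2)/2: ms(P_n) = cms(P_n) = (n-2)/2. -/
import Mathlib


/-- Two edges of a graph (as unordered pairs of vertices) are *disjoint*
if they share no vertex. -/
def edgesDisjoint {V : Type*} (e₁ e₂ : Sym2 V) : Prop :=
  ∀ v : V, v ∈ e₁ → v ∉ e₂

/-- The number of edges of a graph `G`. -/
noncomputable def edgeCount {V : Type*} (G : SimpleGraph V) : ℕ :=
  Nat.card G.edgeSet

/-- A linear ordering `f` of the edges of `G` has matching number at least `d`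
if every `d` consecutive edges in the ordering are pairwise disjoint. -/
def LinearGood {V : Type*} (G : SimpleGraph V)
    (f : Fin (edgeCount G) ≃ G.edgeSet) (d : ℕ) : Prop :=
  ∀ j k : Fin (edgeCount G), j ≠ k → (j : ℕ) < (k : ℕ) + d → (k : ℕ) < (j : ℕ) + d →
    edgesDisjoint (f j : Sym2 V) (f k : Sym2 V)

/-- The matching sequencibility `ms G`: the largest `d` (necessarily at most the
number of edges) for which some linear ordering of the edges of `G` has every
`d` consecutive edges forming a matching. -/
noncomputable def ms {V : Type*} (G : SimpleGraph V) : ℕ :=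
  sSup {d : ℕ | d ≤ edgeCount G ∧ ∃ f : Fin (edgeCount G) ≃ G.edgeSet, LinearGood G f d}

/-- A cyclic ordering `f : ZMod N ≃ edges of G` has cyclic matching number at least `d`
if every `d` cyclically consecutive edges in the ordering are pairwise disjoint. -/
def CyclicGood {V : Type*} (G : SimpleGraph V) {N : ℕ}
    (f : ZMod N ≃ G.edgeSet) (d : ℕ) : Prop :=
  ∀ (i : ZMod N) (j k : ℕ), j < d → k < d → j ≠ k →
    edgesDisjoint (f (i + (j : ZMod N)) : Sym2 V) (f (i + (k : ZMod N)) : Sym2 V)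

/-- The cyclic matching sequencibility `cms G`: the largest `d` for which some
cyclic ordering of the edges of `G` has every `d` cyclically consecutive edges
forming a matching. -/
noncomputable def cms {V : Type*} (G : SimpleGraph V) : ℕ :=
  sSup {d : ℕ | ∃ f : ZMod (edgeCount G) ≃ G.edgeSet, CyclicGood G f d}

open SimpleGraph
lemma edgesDisjoint_symm {V : Type*} {e₁ e₂ : Sym2 V}
    (h : edgesDisjoint e₁ e₂) : edgesDisjoint e₂ e₁ :=
  fun v hv hv' => h v hv' hv

/-- the `i`-th edge of the path graph -/
def pEdge (n : ℕ) (i : Fin (n - 1)) : Sym2 (Fin n) :=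
  s(⟨i.val, by have := i.isLt; omega⟩, ⟨i.val + 1, by have := i.isLt; omega⟩)

lemma pEdge_mem (n : ℕ) (i : Fin (n - 1)) : pEdge n i ∈ (pathGraph n).edgeSet := by
  rw [pEdge, mem_edgeSet, pathGraph_adj]; left; rfl

/-- index of an edge: the smaller endpoint -/
def pIdx {n : ℕ} (e : Sym2 (Fin n)) : ℕ :=
  Sym2.lift ⟨fun a b => min a.val b.val, fun a b => min_comm _ _⟩ e

lemma pIdx_lt {n : ℕ} {e : Sym2 (Fin n)} (he : e ∈ (pathGraph n).edgeSet) :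
    pIdx e < n - 1 := by
  induction e using Sym2.ind with
  | _ u v =>
    rw [mem_edgeSet, pathGraph_adj] at he
    have h1 := u.isLt; have h2 := v.isLt
    simp only [pIdx, Sym2.lift_mk]
    omega

lemma pIdx_pEdge {n : ℕ} (i : Fin (n - 1)) : pIdx (pEdge n i) = i.val := by
  simp only [pEdge, pIdx, Sym2.lift_mk]
  omega

lemma pEdge_pIdx {n : ℕ} {e : Sym2 (Fin n)} (he : e ∈ (pathGraph n).edgeSet) :
    pEdge n ⟨pIdx e, pIdx_lt he⟩ = e := by
  induction e using Sym2.ind with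
  | _ u v =>
    rw [mem_edgeSet, pathGraph_adj] at he
    rcases he with h | h
    · have h1 : pIdx s(u, v) = u.val := by simp only [pIdx, Sym2.lift_mk]; omega
      rw [pEdge, Sym2.eq_iff]
      left
      exact ⟨Fin.ext h1, Fin.ext (by show pIdx s(u, v) + 1 = v.val; omega)⟩
    · have h1 : pIdx s(u, v) = v.val := by simp only [pIdx, Sym2.lift_mk]; omega
      rw [pEdge, Sym2.eq_iff]
      right
      exact ⟨Fin.ext h1, Fin.ext (by show pIdx s(u, v) + 1 = u.val; omega)⟩

lemma pEdge_disjoint {n : ℕ} {i j : Fin (n - 1)}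
    (h : i.val + 2 ≤ j.val ∨ j.val + 2 ≤ i.val) :
    edgesDisjoint (pEdge n i) (pEdge n j) := by
  intro v hv hv'
  rw [pEdge, Sym2.mem_iff] at hv hv'
  rcases hv with h1 | h1 <;> rcases hv' with h2 | h2 <;>
    · have := (h1.symm.trans h2)
      rw [Fin.ext_iff] at this
      simp only [] at this
      omega

lemma pEdge_gap {n : ℕ} {i j : Fin (n - 1)}
    (hd : edgesDisjoint (pEdge n i) (pEdge n j)) :
    i.val + 2 ≤ j.val ∨ j.val + 2 ≤ i.val := by
  by_contra hc
  push_neg at hc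
  have hi := i.isLt; have hj := j.isLt
  rcases le_total i.val j.val with hle | hle
  · exact hd ⟨j.val, by omega⟩
      (by rw [pEdge, Sym2.mem_iff, Fin.ext_iff, Fin.ext_iff]; simp only []; omega)
      (by rw [pEdge, Sym2.mem_iff]; left; rfl)
  · exact hd ⟨i.val, by omega⟩
      (by rw [pEdge, Sym2.mem_iff]; left; rfl)
      (by rw [pEdge, Sym2.mem_iff, Fin.ext_iff, Fin.ext_iff]; simp only []; omega)

lemma edgeCount_path (n : ℕ) : edgeCount (pathGraph n) = n - 1 := by
  have hbij : Function.Bijective (fun i : Fin (n-1) =>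
      (⟨pEdge n i, pEdge_mem n i⟩ : (pathGraph n).edgeSet)) := by
    constructor
    · intro a b hab
      have hab' : pEdge n a = pEdge n b := congrArg Subtype.val hab
      have : pIdx (pEdge n a) = pIdx (pEdge n b) := by rw [hab']
      rw [pIdx_pEdge, pIdx_pEdge] at this
      exact Fin.ext this
    · rintro ⟨e, he⟩
      exact ⟨⟨pIdx e, pIdx_lt he⟩, Subtype.ext (pEdge_pIdx he)⟩
  rw [edgeCount, ← Nat.card_congr (Equiv.ofBijective _ hbij), Nat.card_eq_fintype_card,
    Fintype.card_fin]

/-- If `h` numbers, pairwise at distance ≥ 2, all lie in `[0, 2h-2]`, then all are even. -/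
lemma evens_of_spread {h : ℕ} (hh : 1 ≤ h) (u : Fin h → ℕ)
    (hb : ∀ a, u a < 2 * h - 1)
    (hgap : ∀ a b, a ≠ b → u a + 2 ≤ u b ∨ u b + 2 ≤ u a) :
    ∀ a, u a % 2 = 0 := by
  have hinj : Function.Injective
      (fun a : Fin h => (⟨u a / 2, by have := hb a; omega⟩ : Fin h)) := by
    intro a b hab
    by_contra hne
    have := hgap a b hne
    simp only [Fin.mk.injEq] at hab
    omega
  have hsurj := Finite.injective_iff_surjective.mp hinj
  have step : ∀ m, (∃ b, u b = 2 * m + 1) → ∃ c, u c = 2 * m + 3 := by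
    rintro m ⟨b, hbm⟩
    have hmlt : m + 1 < h := by have := hb b; omega
    obtain ⟨c, hc⟩ := hsurj ⟨m + 1, hmlt⟩
    simp only [Fin.mk.injEq] at hc
    have hne : c ≠ b := by intro e; rw [e] at hc; omega
    have := hgap c b hne
    exact ⟨c, by omega⟩
  have key : ∀ k m, (∃ b, u b = 2 * m + 1) → ∃ b, u b = 2 * (m + k) + 1 := by
    intro k
    induction k with
    | zero => intro m hm; simpa using hm
    | succ k ih =>
      intro m hm
      obtain ⟨c, hc⟩ := step (m + k) (ih m hm)
      exact ⟨c, by omega⟩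
  intro a
  by_contra hodd
  obtain ⟨b, hb2⟩ := key (h - 1 - u a / 2) (u a / 2) ⟨a, by omega⟩
  have h1 := hb a
  have h2 := hb b
  omega

/-- Upper bound: no linear ordering of `P n` is good for `d = n/2`. -/
lemma linear_upper (n : ℕ) (hn : 4 ≤ n) (hpar : Even n)
    (f : Fin (edgeCount (pathGraph n)) ≃ (pathGraph n).edgeSet)
    (hf : LinearGood (pathGraph n) f (n / 2)) : False := by
  obtain ⟨m, rfl⟩ := hpar
  have hm : 2 ≤ m := by omega
  have hM : edgeCount (pathGraph (m + m)) = m + m - 1 := edgeCount_path _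
  have hd : (m + m) / 2 = m := by omega
  rw [hd] at hf
  -- the index of the edge at position p
  set idx : Fin (edgeCount (pathGraph (m + m))) → ℕ :=
    fun p => pIdx ((f p : Sym2 (Fin (m + m)))) with hidx
  have hlt : ∀ p, idx p < m + m - 1 := fun p => pIdx_lt (f p).2
  have hinj : Function.Injective idx := by
    intro p q hpq
    have h1 := pEdge_pIdx (n := m + m) (f p).2
    have h2 := pEdge_pIdx (n := m + m) (f q).2
    apply f.injective
    apply Subtype.ext
    rw [← h1, ← h2]
    congr 1
    exact Fin.ext hpq
  have hgap : ∀ p q : Fin (edgeCount (pathGraph (m + m))), p ≠ q →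
      (p : ℕ) < (q : ℕ) + m → (q : ℕ) < (p : ℕ) + m → idx p + 2 ≤ idx q ∨ idx q + 2 ≤ idx p := by
    intro p q hne h1 h2
    have hd := hf p q hne h1 h2
    have e1 := pEdge_pIdx (n := m + m) (f p).2
    have e2 := pEdge_pIdx (n := m + m) (f q).2
    rw [← e1, ← e2] at hd
    exact pEdge_gap hd
  -- every window of length m consists of even indices
  have window : ∀ s : ℕ, s + m ≤ m + m - 1 →
      ∀ p : Fin (edgeCount (pathGraph (m + m))), s ≤ p.val → p.val < s + m →
      idx p % 2 = 0 := by
    intro s hs p hp1 hp2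
    have key := evens_of_spread (h := m) (by omega)
      (fun a : Fin m => idx ⟨s + a.val, by have := a.isLt; omega⟩) ?_ ?_
    · have := key ⟨p.val - s, by omega⟩
      beta_reduce at this
      have heq : (⟨s + (p.val - s), by omega⟩ : Fin (edgeCount (pathGraph (m + m)))) = p :=
        Fin.ext (by simp; omega)
      rwa [heq] at this
    · intro a
      beta_reduce
      have := hlt ⟨s + a.val, by have := a.isLt; omega⟩
      omega
    · intro a b hne
      beta_reduce
      have ha := a.isLt; have hb := b.isLt
      apply hgap
      · intro e
        apply hne
        have : s + a.val = s + b.val := by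
          have := congrArg Fin.val e
          simpa using this
        exact Fin.ext (by omega)
      · show s + a.val < s + b.val + m; omega
      · show s + b.val < s + a.val + m; omega
  have all_even : ∀ p : Fin (edgeCount (pathGraph (m + m))), idx p % 2 = 0 := by
    intro p
    have hp := p.isLt
    rcases lt_or_ge p.val m with h1 | h1
    · exact window 0 (by omega) p (by omega) (by omega)
    · exact window (m - 1) (by omega) p (by omega) (by omega)
  -- pigeonhole
  have hcard : Function.Injective
      (fun p : Fin (edgeCount (pathGraph (m + m))) => (⟨idx p / 2, by have := hlt p; omega⟩ : Fin m)) := by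
    intro p q hpq
    simp only [Fin.mk.injEq] at hpq
    apply hinj
    have := all_even p; have := all_even q
    omega
  have := Fintype.card_le_of_injective _ hcard
  simp only [Fintype.card_fin] at this
  omega

/-- The interleaving permutation value. -/
def sig (m p : ℕ) : ℕ := if p < m then 2 * p else 2 * (p - m) + 1

lemma sig_lt {m p : ℕ} (hm : 2 ≤ m) (hp : p < m + m - 1) : sig m p < m + m - 1 := by
  simp only [sig]; split <;> omega

lemma sig_inj {m a b : ℕ} (ha : a < m + m - 1) (hb : b < m + m - 1)
    (h : sig m a = sig m b) : a = b := by
  simp only [sig] at h; split_ifs at h <;> omega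

/-- Construction: a cyclic ordering of the edges of `P (m+m)` that is good for `d = m - 1`. -/
lemma exists_cyclic (m : ℕ) (hm : 2 ≤ m) :
    ∃ f : ZMod (edgeCount (pathGraph (m + m))) ≃ (pathGraph (m + m)).edgeSet,
      CyclicGood (pathGraph (m + m)) f (m - 1) := by
  have hM : edgeCount (pathGraph (m + m)) = m + m - 1 := edgeCount_path _
  haveI : NeZero (edgeCount (pathGraph (m + m))) := ⟨by omega⟩
  have hvlt : ∀ x : ZMod (edgeCount (pathGraph (m + m))), x.val < m + m - 1 := by
    intro x; have := ZMod.val_lt x; omega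
  set g : ZMod (edgeCount (pathGraph (m + m))) → (pathGraph (m + m)).edgeSet :=
    fun x => ⟨pEdge (m + m) ⟨sig m x.val, sig_lt hm (hvlt x)⟩, pEdge_mem _ _⟩ with hg
  have hbij : Function.Bijective g := by
    rw [Nat.bijective_iff_injective_and_card]
    constructor
    · intro x y hxy
      have h1 : pEdge (m + m) ⟨sig m x.val, sig_lt hm (hvlt x)⟩
          = pEdge (m + m) ⟨sig m y.val, sig_lt hm (hvlt y)⟩ := congrArg Subtype.val hxy
      have h2 := congrArg pIdx h1
      rw [pIdx_pEdge, pIdx_pEdge] at h2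
      exact ZMod.val_injective _ (sig_inj (hvlt x) (hvlt y) h2)
    · rw [Nat.card_zmod]; rfl
  refine ⟨Equiv.ofBijective g hbij, ?_⟩
  -- core disjointness fact
  have core : ∀ (a : ZMod (edgeCount (pathGraph (m + m)))) (t : ℕ), 1 ≤ t → t ≤ m - 2 →
      edgesDisjoint (g a : Sym2 (Fin (m + m))) (g (a + (t : ZMod _)) : Sym2 (Fin (m + m))) := by
    intro a t ht1 ht2
    have hv : (a + (t : ZMod (edgeCount (pathGraph (m + m))))).val
        = (a.val + t) % (m + m - 1) := by
      rw [ZMod.val_add, ZMod.val_natCast_of_lt (by omega)]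
      exact congrArg (fun Z => (a.val + t) % Z) hM
    have ha := hvlt a
    have hq : (a.val + t) % (m + m - 1)
        = if a.val + t < m + m - 1 then a.val + t else a.val + t - (m + m - 1) := by
      split
      · exact Nat.mod_eq_of_lt ‹_›
      · rw [Nat.mod_eq_sub_mod (by omega), Nat.mod_eq_of_lt (by omega)]
    apply pEdge_disjoint
    show sig m a.val + 2 ≤ sig m (a + (t : ZMod _)).val ∨
      sig m (a + (t : ZMod _)).val + 2 ≤ sig m a.val
    rw [hv, hq]
    simp only [sig]
    split_ifs <;> omega
  -- derive CyclicGood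
  intro i j k hj hk hjk
  rcases Nat.lt_or_ge j k with hlt | hge
  · have heq : (i + (j : ZMod _)) + ((k - j : ℕ) : ZMod (edgeCount (pathGraph (m + m))))
        = i + (k : ZMod _) := by
      rw [Nat.cast_sub hlt.le]; ring
    have := core (i + (j : ZMod _)) (k - j) (by omega) (by omega)
    rw [heq] at this
    exact this
  · have hlt : k < j := by omega
    have heq : (i + (k : ZMod _)) + ((j - k : ℕ) : ZMod (edgeCount (pathGraph (m + m))))
        = i + (j : ZMod _) := by
      rw [Nat.cast_sub hlt.le]; ring
    have := core (i + (k : ZMod _)) (j - k) (by omega) (by omega)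
    rw [heq] at this
    exact edgesDisjoint_symm this

/-- From a cyclic good ordering we get a linear good ordering. -/
lemma cyclic_to_linear {V : Type*} (G : SimpleGraph V) [NeZero (edgeCount G)] (d : ℕ)
    (f : ZMod (edgeCount G) ≃ G.edgeSet) (hf : CyclicGood G f d) :
    ∃ g : Fin (edgeCount G) ≃ G.edgeSet, LinearGood G g d := by
  refine ⟨(⟨fun p => ((p : ℕ) : ZMod (edgeCount G)),
      fun x => ⟨x.val, ZMod.val_lt x⟩,
      fun p => Fin.ext (ZMod.val_natCast_of_lt p.isLt),
      fun x => ZMod.natCast_rightInverse x⟩ : Fin (edgeCount G) ≃ ZMod (edgeCount G)).trans f, ?_⟩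
  intro j k hne hjk hkj
  simp only [Equiv.trans_apply, Equiv.coe_fn_mk]
  have hvne : (j : ℕ) ≠ (k : ℕ) := fun h => hne (Fin.ext h)
  rcases Nat.lt_or_ge (j : ℕ) (k : ℕ) with hlt | hge
  · have heq : ((j : ℕ) : ZMod (edgeCount G)) + (((k : ℕ) - (j : ℕ) : ℕ) : ZMod (edgeCount G))
        = ((k : ℕ) : ZMod (edgeCount G)) := by
      rw [Nat.cast_sub hlt.le]; ring
    have := hf ((j : ℕ) : ZMod (edgeCount G)) 0 ((k : ℕ) - (j : ℕ))
      (by omega) (by omega) (by omega)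
    rw [Nat.cast_zero, add_zero, heq] at this
    exact this
  · have hlt : (k : ℕ) < (j : ℕ) := by omega
    have heq : ((k : ℕ) : ZMod (edgeCount G)) + (((j : ℕ) - (k : ℕ) : ℕ) : ZMod (edgeCount G))
        = ((j : ℕ) : ZMod (edgeCount G)) := by
      rw [Nat.cast_sub hlt.le]; ring
    have := hf ((k : ℕ) : ZMod (edgeCount G)) 0 ((j : ℕ) - (k : ℕ))
      (by omega) (by omega) (by omega)
    rw [Nat.cast_zero, add_zero, heq] at this
    exact edgesDisjoint_symm this


/-- For every even integer `n ≥ 4`,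
`ms (P_n) = cms (P_n) = (n-2)/2`. -/
theorem ms_cms_pathGraph_even (n : ℕ) (hn : 4 ≤ n) (hpar : Even n) :
    ms (SimpleGraph.pathGraph n) = (n - 2) / 2 ∧
    cms (SimpleGraph.pathGraph n) = (n - 2) / 2 := by
  obtain ⟨m, rfl⟩ := hpar
  have hm : 2 ≤ m := by omega
  have hM : edgeCount (pathGraph (m + m)) = m + m - 1 := edgeCount_path _
  haveI : NeZero (edgeCount (pathGraph (m + m))) := ⟨by omega⟩
  obtain ⟨fc, hfc⟩ := exists_cyclic m hm
  obtain ⟨fl, hfl⟩ := cyclic_to_linear _ (m - 1) fc hfc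
  have htarget : (m + m - 2) / 2 = m - 1 := by omega
  have hub : ∀ d (f : Fin (edgeCount (pathGraph (m + m))) ≃ (pathGraph (m + m)).edgeSet),
      LinearGood (pathGraph (m + m)) f d → d ≤ m - 1 := by
    intro d f hf
    by_contra hc
    push_neg at hc
    apply linear_upper (m + m) (by omega) ⟨m, rfl⟩ f
    have hhalf : (m + m) / 2 = m := by omega
    rw [hhalf]
    intro j k h1 h2 h3
    exact hf j k h1 (by omega) (by omega)
  rw [htarget]
  constructor
  · unfold ms
    have hmem : m - 1 ∈ {d : ℕ | d ≤ edgeCount (pathGraph (m + m)) ∧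
        ∃ f : Fin (edgeCount (pathGraph (m + m))) ≃ (pathGraph (m + m)).edgeSet,
          LinearGood (pathGraph (m + m)) f d} := ⟨by omega, fl, hfl⟩
    apply le_antisymm
    · apply csSup_le (Set.nonempty_of_mem hmem)
      rintro d ⟨-, f, hf⟩
      exact hub d f hf
    · exact le_csSup ⟨m - 1, by rintro d ⟨-, f, hf⟩; exact hub d f hf⟩ hmem
  · unfold cms
    have hmem : m - 1 ∈ {d : ℕ |
        ∃ f : ZMod (edgeCount (pathGraph (m + m))) ≃ (pathGraph (m + m)).edgeSet,
          CyclicGood (pathGraph (m + m)) f d} := ⟨fc, hfc⟩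
    apply le_antisymm
    · apply csSup_le (Set.nonempty_of_mem hmem)
      rintro d ⟨f, hf⟩
      obtain ⟨g, hg⟩ := cyclic_to_linear _ d f hf
      exact hub d g hg
    · refine le_csSup ⟨m - 1, ?_⟩ hmem
      rintro d ⟨f, hf⟩
      obtain ⟨g, hg⟩ := cyclic_to_linear _ d f hf
      exact hub d g hg
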